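/- arXiv:1511.03570 — 2 statements merged into one kernel-verified Lean document; each statement's English description precedes it below -/
import Mathlib

section
/- Let X = X₁ × ⋯ × X_n with |X_i| ≥ 2, let 1 ≤ k ≤ n, and let A ∈ ℝ^{a×X} have rows spanning V_k(X). Let Y = Y₁ × ⋯ × Y_m with |Y_j| ≥ 2, and let B ∈ ℝ^{b×Y} have rows spanning V_1(Y). Suppose X can be covered by Hamming balls K¹,…,Kᵐ (of arbitrary radii) such that, for each j, K^j can be covered by |Y_j|−1 radius-k Hamming balls. Then max_{θ∈ℝ^{ab}} rank(𝒜_θ) = |X|. -/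
open scoped Classical BigOperators

/-- `V_k(X)`: the span of all functions on `X = ∏ i, X_i` depending on at most `k`
coordinates. -/
noncomputable def Vk (n : ℕ) (q : Fin n → ℕ) (k : ℕ) :
    Submodule ℝ ((∀ i, Fin (q i)) → ℝ) :=
  Submodule.span ℝ
    {f : (∀ i, Fin (q i)) → ℝ | ∃ s : Finset (Fin n), s.card ≤ k ∧
      ∀ x x' : ∀ i, Fin (q i), (∀ i ∈ s, x i = x' i) → f x = f x'}

/-- The argmax (inference) set `h_θ(x) = argmax_{y} ⟨θ, A_x ⊗ B_y⟩`. -/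
noncomputable def infSet {a bn : ℕ} {X Y : Type*} [Fintype Y]
    (A : Matrix (Fin a) X ℝ) (B : Matrix (Fin bn) Y ℝ)
    (θ : Fin a × Fin bn → ℝ) (x : X) : Finset Y :=
  Finset.univ.filter (fun y : Y => ∀ y' : Y,
    ∑ s : Fin a × Fin bn, θ s * (A s.1 x * B s.2 y') ≤
      ∑ s : Fin a × Fin bn, θ s * (A s.1 x * B s.2 y))

/-- The tropical morphism matrix `𝒜_θ` with columns
`A_x ⊗ ((1/|h_θ(x)|) ∑_{y ∈ h_θ(x)} B_y)`. -/
noncomputable def tropMat {a bn : ℕ} {X Y : Type*} [Fintype Y]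
    (A : Matrix (Fin a) X ℝ) (B : Matrix (Fin bn) Y ℝ)
    (θ : Fin a × Fin bn → ℝ) : Matrix (Fin a × Fin bn) X ℝ :=
  fun p x =>
    A p.1 x * (((infSet A B θ x).card : ℝ)⁻¹ * ∑ y ∈ infSet A B θ x, B p.2 y)

/-!
Choose `θ` so that the hidden state is decoded block by block: `y_j(x)` is the label of the
nearest centre `c j i` if it lies within distance `k` of `x`, and the extra label `r j - 1`
otherwise. This score is a sum of products of functions of `V_1(X) ⊆ V_k(X)` and indicators of
`V_1(Y)`, so some `θ` realises it, and the argmax is then a singleton `y(x)`. The rows of `𝒜_θ`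
therefore span every `x ↦ f x * g (y x)` with `f ∈ V_k(X)`, `g ∈ V_1(Y)`. Given `x`, pick `j` with
`x ∈ K^j`; the fibre of `y_j` through `x` lies in a radius-`k` Hamming ball, on which `V_k(X)`
interpolates every function (inclusion–exclusion), so the indicator of `x` is a combination of
rows, and `𝒜_θ` has full column rank.
-/

open Finset
open scoped Pointwise

section SpanProducts

variable {R ι κ W W₁ W₂ Z : Type*} [CommSemiring R]

lemma comp_mem_span_range (u : ι → W → R) (σ : Z → W) {f : W → R}
    (hf : f ∈ Submodule.span R (Set.range u)) :
    f ∘ σ ∈ Submodule.span R (Set.range fun i => u i ∘ σ) := by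
  have := Submodule.mem_map_of_mem (f := LinearMap.funLeft R R σ) hf
  rwa [Submodule.map_span, ← Set.range_comp] at this

lemma mul_comp_mem_span_range (u : ι → W₁ → R) (w : κ → W₂ → R) (σ : Z → W₁) (τ : Z → W₂)
    {f : W₁ → R} {g : W₂ → R} (hf : f ∈ Submodule.span R (Set.range u))
    (hg : g ∈ Submodule.span R (Set.range w)) :
    (fun z => f (σ z) * g (τ z)) ∈ Submodule.span R
      (Set.range fun s : ι × κ => fun z => u s.1 (σ z) * w s.2 (τ z)) := by
  have hmul := Submodule.mul_mem_mul (comp_mem_span_range u σ hf) (comp_mem_span_range w τ hg)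
  rw [Submodule.span_mul_span] at hmul
  have hprod : ((Set.range fun i => u i ∘ σ) * Set.range fun i => w i ∘ τ) =
      Set.range fun s : ι × κ => fun z => u s.1 (σ z) * w s.2 (τ z) := by
    ext h
    constructor
    · rintro ⟨_, ⟨i, rfl⟩, _, ⟨j, rfl⟩, rfl⟩
      exact ⟨(i, j), rfl⟩
    · rintro ⟨⟨i, j⟩, rfl⟩
      exact ⟨_, ⟨i, rfl⟩, _, ⟨j, rfl⟩, rfl⟩
  rwa [hprod] at hmul

end SpanProducts

lemma card_le_hammingDist {ι : Type*} [Fintype ι] {β : ι → Type*} [∀ i, DecidableEq (β i)]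
    {x y : ∀ i, β i} {s : Finset ι} (h : ∀ i ∈ s, x i ≠ y i) : #s ≤ hammingDist x y :=
  card_le_card fun i hi => mem_filter.2 ⟨mem_univ i, h i hi⟩

section InteractionSpace

variable {n : ℕ} {q : Fin n → ℕ} {k : ℕ}

lemma mem_Vk_of_dependsOn {s : Finset (Fin n)} (hs : #s ≤ k) {f : (∀ i, Fin (q i)) → ℝ}
    (hf : DependsOn f s) : f ∈ Vk n q k :=
  Submodule.subset_span ⟨s, hs, fun _ _ h => hf h⟩

lemma const_mem_Vk (b : ℝ) : (fun _ => b) ∈ Vk n q k :=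
  mem_Vk_of_dependsOn (s := ∅) (Nat.zero_le k) fun _ _ _ => rfl

lemma comp_eval_mem_Vk (hk : 1 ≤ k) (i : Fin n) (g : Fin (q i) → ℝ) :
    (fun x => g (x i)) ∈ Vk n q k :=
  mem_Vk_of_dependsOn (s := {i}) (by simpa using hk) fun x x' h => by
    rw [h i (by simp)]

lemma hammingDist_mem_Vk (hk : 1 ≤ k) (c : ∀ i, Fin (q i)) :
    (fun x => (hammingDist x c : ℝ)) ∈ Vk n q k := by
  have hsum : (fun x => (hammingDist x c : ℝ)) =
      ∑ i, fun x : ∀ i, Fin (q i) => if x i ≠ c i then (1 : ℝ) else 0 := by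
    ext x
    simp [hammingDist, natCast_card_filter]
  rw [hsum]
  exact Submodule.sum_mem _ fun i _ => comp_eval_mem_Vk hk i fun t => if t ≠ c i then 1 else 0

/-- Inclusion–exclusion over the coordinates where `x` agrees with the centre `c`: the terms of
order `> k` vanish on the ball, and the remaining ones depend on at most `k` coordinates. -/
theorem exists_mem_Vk_eqOn_closedBall (c x : ∀ i, Fin (q i)) :
    ∃ g ∈ Vk n q k, Set.EqOn g (Pi.single x 1) {x' | hammingDist x' c ≤ k} := by
  set S : Finset (Fin n) := {i | x i ≠ c i} with hS
  have hSc : ∀ i ∈ Sᶜ, x i = c i := by simp [hS]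
  set term : Finset (Fin n) → (∀ i, Fin (q i)) → ℝ := fun T x' =>
    (∏ i ∈ S, if x' i = x i then 1 else 0) * ∏ i ∈ T, -(if x' i ≠ c i then 1 else 0)
  have term_eq_zero : ∀ T ⊆ Sᶜ, ∀ x', hammingDist x' c ≤ k → k < #S + #T → term T x' = 0 := by
    intro T hT x' hx' hlt
    by_contra hne
    have hS' : ∀ i ∈ S, x' i ≠ c i := fun i hi => by
      have := (prod_ne_zero_iff.1 (left_ne_zero_of_mul hne)) i hi
      simp_all
    have hT' : ∀ i ∈ T, x' i ≠ c i := fun i hi => by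
      have := (prod_ne_zero_iff.1 (right_ne_zero_of_mul hne)) i hi
      simp_all
    have hdisj : Disjoint S T := disjoint_left.2 fun i hiS hiT => mem_compl.1 (hT hiT) hiS
    have := card_le_hammingDist (s := S ∪ T) fun i hi => (mem_union.1 hi).elim (hS' i) (hT' i)
    rw [card_union_of_disjoint hdisj] at this
    omega
  refine ⟨∑ T ∈ Sᶜ.powerset with #S + #T ≤ k, term T, ?_, fun x' hx' => ?_⟩
  · refine Submodule.sum_mem _ fun T hT => mem_Vk_of_dependsOn (s := S ∪ T)
      ((card_union_le S T).trans (mem_filter.1 hT).2) fun z z' h => ?_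
    simp only [term]
    congr 1 <;> refine prod_congr rfl fun i hi => ?_
    · rw [h i (mem_union_left T hi)]
    · rw [h i (mem_union_right S hi)]
  rw [Finset.sum_apply, sum_filter_of_ne fun T hT hne => not_lt.1 fun hlt =>
    hne (term_eq_zero T (mem_powerset.1 hT) x' hx' hlt)]
  have hcompl : ∀ i ∈ Sᶜ,
      (1 + -(if x' i ≠ c i then 1 else 0) : ℝ) = if x' i = x i then 1 else 0 := by
    intro i hi
    rw [hSc i hi]
    split_ifs <;> simp_all
  simp only [term, ← mul_sum, ← prod_one_add, prod_congr rfl hcompl, prod_mul_prod_compl,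
    Fintype.prod_boole, Pi.single_apply, ← funext_iff]

end InteractionSpace

section LexMin

variable {r : ℕ}

def lexKey (w : Fin r → ℕ) (v : Fin r) : ℕ := r * w v + v

/-- `v₀` minimises `w`, ties broken towards the smaller index (`lexKey w v ≡ v [MOD r]`). -/
def IsLexMin (w : Fin r → ℕ) (v₀ : Fin r) : Prop :=
  ∀ v, v ≠ v₀ → lexKey w v₀ < lexKey w v

lemma exists_isLexMin (hr : 0 < r) (w : Fin r → ℕ) : ∃ v₀, IsLexMin w v₀ := by
  obtain ⟨v₀, -, hv₀⟩ := exists_min_image univ (lexKey w) ⟨⟨0, hr⟩, mem_univ _⟩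
  refine ⟨v₀, fun v hv => (hv₀ v (mem_univ v)).lt_of_ne fun h => hv (Fin.ext ?_)⟩
  have := congrArg (· % r) h
  simpa [lexKey, Nat.mul_add_mod, Nat.mod_eq_of_lt v.isLt, Nat.mod_eq_of_lt v₀.isLt] using
    this.symm

variable {w : Fin r → ℕ} {v₀ : Fin r}

lemma IsLexMin.le (h : IsLexMin w v₀) (v : Fin r) : w v₀ ≤ w v := by
  by_contra! hlt
  have hkey := h v fun hv => (hv ▸ hlt).false
  have hmul : r * w v + r ≤ r * w v₀ := Nat.mul_succ r (w v) ▸ Nat.mul_le_mul_left r hlt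
  have := v.isLt
  simp only [lexKey] at hkey
  omega

lemma IsLexMin.le_of_le (h : IsLexMin w v₀) {v : Fin r} (hv : w v ≤ w v₀) : v₀ ≤ v := by
  by_contra! hlt
  have hkey := h v hlt.ne
  have := Nat.mul_le_mul_left r hv
  simp only [lexKey] at hkey
  omega

end LexMin

section ExtendLast

variable {r k : ℕ} {w : Fin (r - 1) → ℕ} {v₀ : Fin r}

def extendLast (w : Fin (r - 1) → ℕ) (k : ℕ) (v : Fin r) : ℕ :=
  if h : (v : ℕ) < r - 1 then w ⟨v, h⟩ else k

lemma IsLexMin.extendLast_le (h : IsLexMin (extendLast w k) v₀) (i : Fin (r - 1))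
    (hi : (i : ℕ) = v₀) : w i ≤ k := by
  have := h.le ⟨r - 1, by omega⟩
  simpa [extendLast, ← hi] using this

lemma IsLexMin.lt_sub_one (h : IsLexMin (extendLast w k) v₀) (i : Fin (r - 1)) (hi : w i ≤ k) :
    (v₀ : ℕ) < r - 1 := by
  by_contra hv
  have hle : (v₀ : ℕ) ≤ i :=
    h.le_of_le (v := ⟨i, by omega⟩) (by simpa [extendLast, hv] using hi)
  have := i.isLt
  omega

lemma lexKey_extendLast_hammingDist_mem_Vk {n : ℕ} {q : Fin n → ℕ} (hk : 1 ≤ k)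
    (c : Fin (r - 1) → ∀ i, Fin (q i)) (v : Fin r) :
    (fun x => (lexKey (extendLast (fun i => hammingDist x (c i)) k) v : ℝ)) ∈ Vk n q k := by
  by_cases hv : (v : ℕ) < r - 1
  · simp only [lexKey, extendLast, dif_pos hv, Nat.cast_add, Nat.cast_mul]
    exact Submodule.add_mem _ (Submodule.smul_mem _ (r : ℝ) (hammingDist_mem_Vk hk _))
      (const_mem_Vk _)
  · simp only [lexKey, extendLast, dif_neg hv]
    exact const_mem_Vk _

end ExtendLast

lemma sum_lt_sum_of_ne {ι M : Type*} [Fintype ι] [AddCommMonoid M] [PartialOrder M]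
    [IsOrderedCancelAddMonoid M] {Z : ι → Type*} {f : ∀ i, Z i → M} {y₀ y : ∀ i, Z i}
    (hf : ∀ i z, z ≠ y₀ i → f i z < f i (y₀ i)) (hy : y ≠ y₀) :
    ∑ i, f i (y i) < ∑ i, f i (y₀ i) := by
  obtain ⟨i, hi⟩ := Function.ne_iff.1 hy
  refine sum_lt_sum (fun j _ => ?_) ⟨i, mem_univ i, hf i _ hi⟩
  by_cases hj : y j = y₀ j
  · rw [hj]
  · exact (hf j _ hj).le

lemma rank_eq_card_of_forall_single_mem_span {ι X K : Type*} [Fintype ι] [Fintype X]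
    [DecidableEq X] [Field K] (M : Matrix ι X K)
    (h : ∀ x, Pi.single x 1 ∈ Submodule.span K (Set.range M)) :
    M.rank = Fintype.card X := by
  have htop : Submodule.span K (Set.range M) = ⊤ := by
    rw [eq_top_iff, ← (Pi.basisFun K X).span_eq, Submodule.span_le]
    rintro _ ⟨x, rfl⟩
    simpa using h x
  rw [Matrix.rank_eq_finrank_span_row, Matrix.row_def, htop, finrank_top,
    Module.finrank_fintype_fun_eq_card]

section TropicalMorphism

variable {a bn : ℕ} {X Y : Type*} [Fintype Y] (A : Matrix (Fin a) X ℝ) (B : Matrix (Fin bn) Y ℝ)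

lemma infSet_eq_singleton {θ : Fin a × Fin bn → ℝ} {x : X} {y₀ : Y}
    (h : ∀ y, y ≠ y₀ → ∑ s, θ s * (A s.1 x * B s.2 y) < ∑ s, θ s * (A s.1 x * B s.2 y₀)) :
    infSet A B θ x = {y₀} := by
  ext y
  simp only [infSet, mem_filter, mem_univ, true_and, mem_singleton]
  refine ⟨fun hy => by_contra fun hne => (h y hne).not_ge (hy y₀), ?_⟩
  rintro rfl y'
  by_cases hy' : y' = y
  · rw [hy']
  · exact (h y' hy').le

lemma tropMat_eq_of_infSet_eq_singleton {θ : Fin a × Fin bn → ℝ} (g : X → Y)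
    (h : ∀ x, infSet A B θ x = {g x}) : tropMat A B θ = fun p x => A p.1 x * B p.2 (g x) := by
  ext p x
  simp [tropMat, h]

end TropicalMorphism

section IndependenceModel

variable {a bn m : ℕ} {r : Fin m → ℕ} (B : Matrix (Fin bn) (∀ j, Fin (r j)) ℝ)

lemma exists_score_eq_sum (hB : Submodule.span ℝ (Set.range B) = Vk m r 1) {X : Type*}
    (A : Matrix (Fin a) X ℝ) (φ : ∀ j, X → Fin (r j) → ℝ)
    (hφ : ∀ j v, (fun x => φ j x v) ∈ Submodule.span ℝ (Set.range A)) :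
    ∃ θ : Fin a × Fin bn → ℝ, ∀ x y, ∑ s, θ s * (A s.1 x * B s.2 y) = ∑ j, φ j x (y j) := by
  have hF : (fun p : X × (∀ j, Fin (r j)) => ∑ j, φ j p.1 (p.2 j)) ∈ Submodule.span ℝ
      (Set.range fun s : Fin a × Fin bn => fun p : X × (∀ j, Fin (r j)) =>
        A s.1 p.1 * B s.2 p.2) := by
    have hsum : (fun p : X × (∀ j, Fin (r j)) => ∑ j, φ j p.1 (p.2 j)) =
        ∑ j, ∑ v : Fin (r j), fun p : X × (∀ j, Fin (r j)) =>
          φ j p.1 v * (if p.2 j = v then 1 else 0) := by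
      ext p
      simp [Finset.sum_apply]
    rw [hsum]
    refine Submodule.sum_mem _ fun j _ => Submodule.sum_mem _ fun v _ =>
      mul_comp_mem_span_range _ _ Prod.fst Prod.snd (hφ j v)
        (hB ▸ comp_eval_mem_Vk le_rfl j fun t => if t = v then 1 else 0)
  obtain ⟨θ, hθ⟩ := (Submodule.mem_span_range_iff_exists_fun ℝ).1 hF
  exact ⟨θ, fun x y => by simpa using congrFun hθ (x, y)⟩

lemma single_mem_span_of_fiber_subset_closedBall (hB : Submodule.span ℝ (Set.range B) = Vk m r 1)
    {n k : ℕ} {q : Fin n → ℕ}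
    (A : Matrix (Fin a) (∀ i, Fin (q i)) ℝ) (hA : Submodule.span ℝ (Set.range A) = Vk n q k)
    (g : (∀ i, Fin (q i)) → ∀ j, Fin (r j)) (j : Fin m) (c x : ∀ i, Fin (q i))
    (hfib : ∀ x', g x' j = g x j → hammingDist x' c ≤ k) :
    Pi.single x 1 ∈ Submodule.span ℝ
      (Set.range fun s : Fin a × Fin bn => fun x' => A s.1 x' * B s.2 (g x')) := by
  obtain ⟨h, hmem, hball⟩ := exists_mem_Vk_eqOn_closedBall (k := k) c x
  have hsingle : Pi.single x 1 = fun x' => h x' * (if g x' j = g x j then 1 else 0) := by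
    ext x'
    by_cases hx' : g x' j = g x j
    · simp [hx', ← hball (hfib x' hx')]
    · have hne : x' ≠ x := by rintro rfl; exact hx' rfl
      simp [hx', hne]
  rw [hsingle]
  exact mul_comp_mem_span_range A B id g (hA ▸ hmem)
    (hB ▸ comp_eval_mem_Vk le_rfl j fun t => if t = g x j then 1 else 0)

end IndependenceModel

theorem tropical_hadamard_mixture_k_interaction_covering_general
    (n : ℕ) (q : Fin n → ℕ)
    (k : ℕ) (hk1 : 1 ≤ k)
    (a : ℕ) (A : Matrix (Fin a) (∀ i, Fin (q i)) ℝ)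
    (hA : Submodule.span ℝ (Set.range A) = Vk n q k)
    (m : ℕ) (r : Fin m → ℕ) (hr : ∀ j, 2 ≤ r j)
    (bn : ℕ) (B : Matrix (Fin bn) (∀ j, Fin (r j)) ℝ)
    (hB : Submodule.span ℝ (Set.range B) = Vk m r 1)
    (d : Fin m → ∀ i, Fin (q i)) (ρ : Fin m → ℕ)
    (hKcov : ∀ x : ∀ i, Fin (q i), ∃ j : Fin m, hammingDist x (d j) ≤ ρ j)
    (c : ∀ j : Fin m, Fin (r j - 1) → ∀ i, Fin (q i))
    (hccov : ∀ (j : Fin m) (x : ∀ i, Fin (q i)), hammingDist x (d j) ≤ ρ j →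
      ∃ i : Fin (r j - 1), hammingDist x (c j i) ≤ k) :
    IsGreatest {s : ℕ | ∃ θ : Fin a × Fin bn → ℝ, s = (tropMat A B θ).rank}
      (Fintype.card (∀ i, Fin (q i))) := by
  set w : ∀ j, (∀ i, Fin (q i)) → Fin (r j) → ℕ :=
    fun j x => extendLast (fun i => hammingDist x (c j i)) k
  choose ystar hystar using fun x j => exists_isLexMin (by have := hr j; omega) (w j x)
  set score : ∀ j, (∀ i, Fin (q i)) → Fin (r j) → ℝ := fun j x v => -(lexKey (w j x) v : ℝ)
  obtain ⟨θ, hθ⟩ := exists_score_eq_sum B hB A score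
    fun j v => hA ▸ Submodule.neg_mem _ (lexKey_extendLast_hammingDist_mem_Vk hk1 (c j) v)
  have hrows : tropMat A B θ = fun p x => A p.1 x * B p.2 (ystar x) :=
    tropMat_eq_of_infSet_eq_singleton A B ystar fun x => infSet_eq_singleton A B fun y hy => by
      simp only [hθ]
      exact sum_lt_sum_of_ne (f := fun j => score j x)
        (fun j v hv => neg_lt_neg (Nat.cast_lt.2 (hystar x j v hv))) hy
  refine ⟨⟨θ, (rank_eq_card_of_forall_single_mem_span _ fun x => ?_).symm⟩, ?_⟩
  · obtain ⟨j, hj⟩ := hKcov x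
    obtain ⟨i, hi⟩ := hccov j x hj
    have hlt := (hystar x j).lt_sub_one i hi
    rw [hrows]
    exact single_mem_span_of_fiber_subset_closedBall B hB A hA ystar j (c j ⟨ystar x j, hlt⟩) x
      fun x' hx' => (hystar x' j).extendLast_le ⟨_, hlt⟩ (by rw [hx'])
  · rintro s ⟨θ', rfl⟩
    exact Matrix.rank_le_card_width _

/-- Visible `k`-interaction model, hidden independence model: if `X`
can be covered by Hamming balls `K¹,…,Kᵐ` such that each `K^j` can be covered by
`|Y_j|−1` radius-`k` Hamming balls, then `max_θ rank 𝒜_θ = |X|`. -/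
theorem tropical_hadamard_mixture_k_interaction_covering
    (n : ℕ) (q : Fin n → ℕ) (hq : ∀ i, 2 ≤ q i)
    (k : ℕ) (hk1 : 1 ≤ k) (hkn : k ≤ n)
    (a : ℕ) (A : Matrix (Fin a) (∀ i, Fin (q i)) ℝ)
    (hA : Submodule.span ℝ (Set.range A) = Vk n q k)
    (m : ℕ) (r : Fin m → ℕ) (hr : ∀ j, 2 ≤ r j)
    (bn : ℕ) (B : Matrix (Fin bn) (∀ j, Fin (r j)) ℝ)
    (hB : Submodule.span ℝ (Set.range B) = Vk m r 1)
    (d : Fin m → ∀ i, Fin (q i)) (ρ : Fin m → ℕ)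
    (hKcov : ∀ x : ∀ i, Fin (q i), ∃ j : Fin m, hammingDist x (d j) ≤ ρ j)
    (c : ∀ j : Fin m, Fin (r j - 1) → ∀ i, Fin (q i))
    (hccov : ∀ (j : Fin m) (x : ∀ i, Fin (q i)), hammingDist x (d j) ≤ ρ j →
      ∃ i : Fin (r j - 1), hammingDist x (c j i) ≤ k) :
    IsGreatest {s : ℕ | ∃ θ : Fin a × Fin bn → ℝ, s = (tropMat A B θ).rank}
      (Fintype.card (∀ i, Fin (q i))) :=
  tropical_hadamard_mixture_k_interaction_covering_general n q k hk1 a A hA m r hr bn B hB d ρ hKcov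
    c hccov
end

section
/- Let X = X₁ × ⋯ × X_n with |X_i| ≥ 2, let 1 ≤ k ≤ n, and let A ∈ ℝ^{a×X} have rows spanning V_k(X). Let Y = Y₁ × ⋯ × Y_m with |Y_j| ≥ 2, let Λ' be an inclusion-closed family of subsets of [m], and let B ∈ ℝ^{b×Y} have rows spanning V_{Λ'}(Y), so rank B = 1 + ∑_{λ'∈Λ'∖{∅}} ∏_{j∈λ'}(|Y_j|−1). If X contains rank(B) pairwise disjoint radius-k Hamming balls, then max_{θ∈ℝ^{ab}} rank(𝒜_θ) = rank(A)·rank(B). -/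
open scoped Classical BigOperators

/-- `V_Λ(X)`: the span of all functions on `X = ∏ i, X_i` that depend only on the
coordinates `x_λ` for some `λ ∈ Λ`. -/
noncomputable def VLam (n : ℕ) (q : Fin n → ℕ) (Λ : Finset (Finset (Fin n))) :
    Submodule ℝ ((∀ i, Fin (q i)) → ℝ) :=
  Submodule.span ℝ
    {f : (∀ i, Fin (q i)) → ℝ | ∃ s ∈ Λ,
      ∀ x x' : ∀ i, Fin (q i), (∀ i ∈ s, x i = x' i) → f x = f x'}

/-!
Fix a centre `c`. For a down-closed family of supports, the indicators of the cylinders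
`{z | z = w on the support of w}`, over the points `w` whose support (where `w ≠ c`) belongs to the
family, are unitriangular on these same points. So they form a basis of the hierarchical space:
its dimension counts these points, and it interpolates arbitrary values on them. For `V_k` these
points form the radius-`k` Hamming ball around `c`.

The rows of `𝒜_θ` are pointwise products of rows of `A` with rows of `B * D_θ`, where `D_θ`
averages over the argmax sets, so `rank 𝒜_θ ≤ rank A * rank B`. For the reverse inequality,
attach a disjoint ball to each basis point `w` of `V_Λ'`, and take `θ` with
`⟨θ, A_x ⊗ B_y⟩ = ∑_w M ^ |supp w| * (2k + 1 - 2 d(x, c_w)) * 1_w(y)`. The weight of `w` is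
positive only on its own ball, and the powers of `M` let it dominate the points below `w`. So on
that ball the argmax in `y` is the class of `w`, and the columns of `𝒜_θ` there are `A_x ⊗ B_w`.
Interpolating on the balls and on the points then yields `rank A * rank B` independent columns.
-/

noncomputable section

open Finset Submodule
open scoped Pointwise

section Hierarchical

variable {ι : Type*} {α : ι → Type*}

/-- `Vk n q k` and `VLam n q Λ` are, by definition, `hierarchicalSpace fun s => #s ≤ k` and
`hierarchicalSpace (· ∈ Λ)`. -/
def hierarchicalSpace (P : Finset ι → Prop) : Submodule ℝ ((∀ i, α i) → ℝ) :=
  span ℝ {f | ∃ s, P s ∧ DependsOn f (s : Set ι)}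

lemma dependsOn_of_mem_span {S : Set ((∀ i, α i) → ℝ)} {s : Set ι}
    (hS : ∀ f ∈ S, DependsOn f s) {f : (∀ i, α i) → ℝ} (hf : f ∈ span ℝ S) :
    DependsOn f s := by
  induction hf using Submodule.span_induction with
  | mem f hf => exact hS f hf
  | zero => exact fun _ _ _ => rfl
  | add f g _ _ hf hg => exact fun x y h => by simp only [Pi.add_apply, hf h, hg h]
  | smul r f _ hf => exact fun x y h => by simp only [Pi.smul_apply, hf h]

variable {P : Finset ι → Prop}

lemma dependsOn_of_mem_hierarchicalSpace (hP : ∀ s, P s → ∀ t ⊆ s, P t)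
    {f : (∀ i, α i) → ℝ} (hf : f ∈ hierarchicalSpace P) : DependsOn f {l | P {l}} :=
  dependsOn_of_mem_span (by
    rintro _ ⟨s, hs, hf⟩
    exact hf.mono fun l hl => hP s hs {l} (singleton_subset_iff.2 hl)) hf

lemma const_mem_hierarchicalSpace (hP : P ∅) (r : ℝ) :
    (fun _ : ∀ i, α i => r) ∈ hierarchicalSpace P :=
  subset_span ⟨∅, hP, by simpa using dependsOn_const r⟩

variable [Fintype ι]

def centeredSupport (c x : ∀ i, α i) : Finset ι := univ.filter fun i => x i ≠ c i

abbrev HierPoint (c : ∀ i, α i) (P : Finset ι → Prop) : Type _ :=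
  {w : ∀ i, α i // P (centeredSupport c w)}

def cylinderIndicator (c w : ∀ i, α i) (z : ∀ i, α i) : ℝ :=
  if ∀ i ∈ centeredSupport c w, z i = w i then 1 else 0

variable {c : ∀ i, α i}

lemma mem_centeredSupport {x : ∀ i, α i} {i : ι} : i ∈ centeredSupport c x ↔ x i ≠ c i := by
  simp [centeredSupport]

lemma card_centeredSupport [∀ i, DecidableEq (α i)] (x : ∀ i, α i) :
    #(centeredSupport c x) = hammingDist x c := by
  unfold centeredSupport hammingDist
  congr

lemma eq_of_notMem_centeredSupport {x : ∀ i, α i} {i : ι} (h : i ∉ centeredSupport c x) :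
    x i = c i :=
  not_not.1 (mt mem_centeredSupport.2 h)

lemma cylinderIndicator_dependsOn (w : ∀ i, α i) :
    DependsOn (cylinderIndicator c w) (centeredSupport c w : Set ι) := by
  intro x y h
  simp only [cylinderIndicator]
  congr 1
  exact propext <| forall₂_congr fun i hi => by rw [h i hi]

lemma cylinderIndicator_self (w : ∀ i, α i) : cylinderIndicator c w w = 1 :=
  if_pos fun _ _ => rfl

lemma cylinderIndicator_eq_one_iff {w z : ∀ i, α i} :
    cylinderIndicator c w z = 1 ↔ ∀ i ∈ centeredSupport c w, z i = w i := by
  unfold cylinderIndicator; split_ifs with h <;> simpa using h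

lemma cylinderIndicator_eq_zero_iff {w z : ∀ i, α i} :
    cylinderIndicator c w z = 0 ↔ ¬ ∀ i ∈ centeredSupport c w, z i = w i := by
  unfold cylinderIndicator; split_ifs with h <;> simpa using h

lemma cylinderIndicator_eq_zero_or_one (w z : ∀ i, α i) :
    cylinderIndicator c w z = 0 ∨ cylinderIndicator c w z = 1 := by
  unfold cylinderIndicator; split_ifs <;> simp

lemma centeredSupport_subset_of_cylinderIndicator_eq_one {w z : ∀ i, α i}
    (h : cylinderIndicator c w z = 1) : centeredSupport c w ⊆ centeredSupport c z := fun i hi => by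
  rw [mem_centeredSupport, cylinderIndicator_eq_one_iff.1 h i hi]
  exact mem_centeredSupport.1 hi

lemma centeredSupport_ssubset_of_cylinderIndicator_eq_one {w z : ∀ i, α i}
    (h : cylinderIndicator c w z = 1) (hne : w ≠ z) :
    centeredSupport c w ⊂ centeredSupport c z := by
  refine (centeredSupport_subset_of_cylinderIndicator_eq_one h).ssubset_of_ne
    fun heq => hne (funext fun i => ?_)
  rw [cylinderIndicator_eq_one_iff] at h
  by_cases hi : i ∈ centeredSupport c w
  · exact (h i hi).symm
  · rw [eq_of_notMem_centeredSupport hi,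
      eq_of_notMem_centeredSupport (heq ▸ hi : i ∉ centeredSupport c z)]

lemma hammingDist_mem_hierarchicalSpace [∀ i, DecidableEq (α i)] (hP : ∀ i, P {i})
    (c : ∀ i, α i) :
    (fun x : ∀ i, α i => (hammingDist x c : ℝ)) ∈ hierarchicalSpace P := by
  have : (fun x : ∀ i, α i => (hammingDist x c : ℝ)) =
      ∑ i, fun x : ∀ i, α i => if x i ≠ c i then (1 : ℝ) else 0 := by
    funext x
    rw [Finset.sum_apply, hammingDist, natCast_card_filter]
  rw [this]
  refine sum_mem fun i _ => subset_span ⟨{i}, hP i, fun x y h => ?_⟩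
  simp only [h i (by simp)]

variable [∀ i, Fintype (α i)]

/-- Unitriangular: `cylinderIndicator c w z ≠ 0` forces `w = z` or a strictly smaller support. -/
lemma linearIndependent_cylinderIndicator_restrict (P : Finset ι → Prop) :
    LinearIndependent ℝ fun w : HierPoint c P => fun z : HierPoint c P =>
      cylinderIndicator c w.1 z.1 := by
  rw [Fintype.linearIndependent_iff]
  intro g hg
  suffices ∀ N, ∀ z : HierPoint c P, #(centeredSupport c z.1) = N → g z = 0 from
    fun z => this _ z rfl
  intro N
  induction N using Nat.strong_induction_on with
  | _ N ih =>
    intro z hz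
    have hsum := congrFun hg z
    simp only [Finset.sum_apply, Pi.smul_apply, smul_eq_mul, Pi.zero_apply] at hsum
    rwa [Finset.sum_eq_single z, cylinderIndicator_self, mul_one] at hsum
    · intro w _ hwz
      rcases cylinderIndicator_eq_zero_or_one w.1 z.1 with h0 | h1
      · rw [h0, mul_zero]
      · have hlt := card_lt_card <| centeredSupport_ssubset_of_cylinderIndicator_eq_one h1
          fun h => hwz (Subtype.ext h)
        rw [ih _ (hz ▸ hlt) w rfl, zero_mul]
    · exact fun h => absurd (mem_univ z) h

lemma exists_mem_span_cylinderIndicator_eqOn (P : Finset ι → Prop)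
    (h : HierPoint c P → ℝ) :
    ∃ g ∈ span ℝ (Set.range fun w : HierPoint c P => cylinderIndicator c w.1),
      ∀ z : HierPoint c P, g z.1 = h z := by
  have htop := (linearIndependent_cylinderIndicator_restrict (c := c) P
    ).span_eq_top_of_card_eq_finrank' (Module.finrank_fintype_fun_eq_card ℝ).symm
  obtain ⟨a, ha⟩ := (mem_span_range_iff_exists_fun ℝ).1 (htop ▸ mem_top : h ∈ _)
  refine ⟨∑ w, a w • cylinderIndicator c w.1,
    sum_mem fun w _ => smul_mem _ _ (subset_span ⟨w, rfl⟩), fun z => ?_⟩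
  simpa [Finset.sum_apply] using congrFun ha z

lemma mem_span_cylinderIndicator_of_dependsOn {s : Finset ι}
    {f : (∀ i, α i) → ℝ} (hf : DependsOn f (s : Set ι)) :
    f ∈ span ℝ (Set.range fun w : HierPoint c (· ⊆ s) => cylinderIndicator c w.1) := by
  obtain ⟨g, hg, hgf⟩ := exists_mem_span_cylinderIndicator_eqOn (c := c) (· ⊆ s) fun z => f z.1
  have hgs : DependsOn g (s : Set ι) := dependsOn_of_mem_span (by
    rintro _ ⟨w, rfl⟩
    exact (cylinderIndicator_dependsOn w.1).mono (coe_subset.2 w.2)) hg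
  convert hg using 1
  funext z
  let z' : HierPoint c (· ⊆ s) := ⟨fun i => if i ∈ s then z i else c i, fun i hi => by
    by_contra his
    exact mem_centeredSupport.1 hi (if_neg his)⟩
  have hz' : ∀ i ∈ (s : Set ι), z i = z'.1 i := fun i hi => (if_pos hi).symm
  rw [hf hz', ← hgf z', hgs fun i hi => (hz' i hi).symm]

lemma hierarchicalSpace_eq_span_cylinderIndicator (hP : ∀ s, P s → ∀ t ⊆ s, P t) :
    hierarchicalSpace P = span ℝ (Set.range fun w : HierPoint c P => cylinderIndicator c w.1) := by
  refine le_antisymm (span_le.2 ?_) (span_le.2 ?_)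
  · rintro f ⟨s, hs, hf⟩
    refine span_mono ?_ (mem_span_cylinderIndicator_of_dependsOn (c := c) hf)
    rintro _ ⟨w, rfl⟩
    exact ⟨⟨w.1, hP s hs _ w.2⟩, rfl⟩
  · rintro _ ⟨w, rfl⟩
    exact subset_span ⟨_, w.2, cylinderIndicator_dependsOn w.1⟩

variable (c) in
lemma finrank_hierarchicalSpace (hP : ∀ s, P s → ∀ t ⊆ s, P t) :
    Module.finrank ℝ (hierarchicalSpace (α := α) P) = Nat.card (HierPoint c P) := by
  rw [hierarchicalSpace_eq_span_cylinderIndicator hP, Nat.card_eq_fintype_card]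
  exact finrank_span_eq_card <| LinearIndependent.of_comp
    (LinearMap.funLeft ℝ ℝ Subtype.val) (linearIndependent_cylinderIndicator_restrict P)

lemma card_filter_centeredSupport_eq (s : Finset ι) :
    #{w : ∀ i, α i | centeredSupport c w = s} = ∏ i ∈ s, (Fintype.card (α i) - 1) := by
  have : ({w : ∀ i, α i | centeredSupport c w = s} : Finset _) =
      Fintype.piFinset fun i => if i ∈ s then univ.erase (c i) else {c i} := by
    ext w
    simp only [mem_filter, mem_univ, true_and, Fintype.mem_piFinset, Finset.ext_iff,
      mem_centeredSupport]
    refine forall_congr' fun i => ?_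
    split_ifs with hi <;> simp [hi]
  rw [this, Fintype.card_piFinset]
  simp [apply_ite Finset.card, prod_ite_mem]

lemma card_hierPoint :
    Nat.card (HierPoint c P) = ∑ s with P s, ∏ i ∈ s, (Fintype.card (α i) - 1) := by
  rw [Nat.card_eq_fintype_card, Fintype.card_subtype,
    card_eq_sum_card_fiberwise (f := centeredSupport c) (t := {s | P s})
      fun w hw => by simpa using hw]
  refine sum_congr rfl fun s hs => ?_
  rw [← card_filter_centeredSupport_eq s, filter_filter]
  congr 1
  exact filter_congr fun w _ => ⟨And.right, fun h => ⟨h ▸ (mem_filter.1 hs).2, h⟩⟩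

lemma exists_mem_hierarchicalSpace_eqOn (hP : ∀ s, P s → ∀ t ⊆ s, P t)
    (h : HierPoint c P → ℝ) : ∃ f ∈ hierarchicalSpace P, ∀ z : HierPoint c P, f z.1 = h z := by
  rw [hierarchicalSpace_eq_span_cylinderIndicator hP]
  exact exists_mem_span_cylinderIndicator_eqOn P h

variable [DecidableEq ι] {Q : Finset ι → Prop}

lemma sum_mul_cylinderIndicator_lt_of_eqOn_centeredSupport (a : HierPoint c Q → ℝ)
    (i : HierPoint c Q) (hneg : ∀ w ≠ i, a w < 0) {y : ∀ i, α i}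
    (hy : ∀ l ∈ centeredSupport c i.1, y l = i.1 l) {l : ι} (hl : Q {l}) (hyl : y l ≠ i.1 l) :
    ∑ w, a w * cylinderIndicator c w.1 y < ∑ w, a w * cylinderIndicator c w.1 i.1 := by
  rw [← sub_pos, ← sum_sub_distrib]
  have hli : i.1 l = c l := eq_of_notMem_centeredSupport fun h => hyl (hy l h)
  have hsuppW : centeredSupport c (Function.update c l (y l)) = {l} := by
    ext j
    rcases eq_or_ne j l with rfl | hj
    · simp [mem_centeredSupport, ← hli, hyl]
    · simp [mem_centeredSupport, hj]
  let W : HierPoint c Q := ⟨Function.update c l (y l), hsuppW ▸ hl⟩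
  have hWi : W ≠ i := fun h => hyl (by rw [← h]; simp [W])
  refine sum_pos' (fun w _ => ?_) ⟨W, mem_univ W, ?_⟩
  · rcases cylinderIndicator_eq_zero_or_one w.1 i.1 with h0 | h1
    · have hwi : w ≠ i := by rintro rfl; simp [cylinderIndicator_self] at h0
      have := hneg w hwi
      rcases cylinderIndicator_eq_zero_or_one w.1 y with h | h <;> rw [h0, h] <;> nlinarith
    · have hwy : cylinderIndicator c w.1 y = 1 := cylinderIndicator_eq_one_iff.2 fun j hj => by
        rw [hy j (centeredSupport_subset_of_cylinderIndicator_eq_one h1 hj),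
          cylinderIndicator_eq_one_iff.1 h1 j hj]
      rw [h1, hwy, sub_self]
  · have hWy : cylinderIndicator c W.1 y = 1 :=
      cylinderIndicator_eq_one_iff.2 fun j hj => by
        obtain rfl : j = l := by simpa [W, hsuppW] using hj
        simp [W]
    have hWi' : cylinderIndicator c W.1 i.1 = 0 :=
      cylinderIndicator_eq_zero_iff.2 fun h => hyl <| by
        simpa [W] using (h l (by simp [W, hsuppW])).symm
    have := hneg W hWi
    rw [hWy, hWi']
    linarith

lemma sum_mul_cylinderIndicator_lt_of_ne (a : HierPoint c Q → ℝ) (i : HierPoint c Q)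
    (hneg : ∀ w ≠ i, a w < 0)
    (hsmall : ∑ w with centeredSupport c w.1 ⊂ centeredSupport c i.1, |a w| < a i)
    {y : ∀ i, α i} {l : ι} (hl : l ∈ centeredSupport c i.1) (hyl : y l ≠ i.1 l) :
    ∑ w, a w * cylinderIndicator c w.1 y < ∑ w, a w * cylinderIndicator c w.1 i.1 := by
  have hterm : ∀ w, (if w = i then a i else 0) ≤
      a w * (cylinderIndicator c w.1 i.1 - cylinderIndicator c w.1 y) +
        if centeredSupport c w.1 ⊂ centeredSupport c i.1 then |a w| else 0 := by
    intro w
    by_cases hwi : w = i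
    · subst hwi
      have : cylinderIndicator c w.1 y = 0 := cylinderIndicator_eq_zero_iff.2 fun h => hyl (h l hl)
      simp [cylinderIndicator_self, this]
    rw [if_neg hwi]
    have := hneg w hwi
    rcases cylinderIndicator_eq_zero_or_one w.1 i.1 with h0 | h1
    · have : 0 ≤ if centeredSupport c w.1 ⊂ centeredSupport c i.1 then |a w| else 0 := by
        split_ifs <;> positivity
      rcases cylinderIndicator_eq_zero_or_one w.1 y with h | h <;> rw [h0, h] <;> nlinarith
    · rw [if_pos (centeredSupport_ssubset_of_cylinderIndicator_eq_one h1
        fun h => hwi (Subtype.ext h)), h1]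
      rcases cylinderIndicator_eq_zero_or_one w.1 y with h | h <;> rw [h] <;>
        linarith [neg_abs_le (a w)]
  have hsum := sum_le_sum fun w (_ : w ∈ univ) => hterm w
  simp only [mul_sub, sum_ite_eq', if_pos (mem_univ i), sum_add_distrib, ← sum_filter,
    sum_sub_distrib] at hsum
  linarith

lemma forall_sum_mul_cylinderIndicator_le_iff (hQ : ∀ s, Q s → ∀ t ⊆ s, Q t)
    (a : HierPoint c Q → ℝ) (i : HierPoint c Q) (hneg : ∀ w ≠ i, a w < 0)
    (hsmall : ∑ w with centeredSupport c w.1 ⊂ centeredSupport c i.1, |a w| < a i)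
    (y : ∀ i, α i) :
    (∀ y', ∑ w, a w * cylinderIndicator c w.1 y' ≤ ∑ w, a w * cylinderIndicator c w.1 y) ↔
      ∀ l, Q {l} → y l = i.1 l := by
  have hmem : (fun y => ∑ w, a w * cylinderIndicator c w.1 y) ∈ hierarchicalSpace Q := by
    have : (fun y => ∑ w, a w * cylinderIndicator c w.1 y) =
        ∑ w, a w • cylinderIndicator c w.1 := by
      funext y
      simp [Finset.sum_apply]
    rw [this]
    exact sum_mem fun w _ => smul_mem _ _ <| subset_span
      (show cylinderIndicator c w.1 ∈ {f | ∃ s, Q s ∧ DependsOn f (s : Set ι)} from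
        ⟨_, w.2, cylinderIndicator_dependsOn w.1⟩)
  have hdep : ∀ {y y' : ∀ i, α i}, (∀ l, Q {l} → y l = y' l) →
      ∑ w, a w * cylinderIndicator c w.1 y = ∑ w, a w * cylinderIndicator c w.1 y' :=
    fun h => dependsOn_of_mem_hierarchicalSpace hQ hmem h
  have hlt : ∀ y, ¬ (∀ l, Q {l} → y l = i.1 l) →
      ∑ w, a w * cylinderIndicator c w.1 y < ∑ w, a w * cylinderIndicator c w.1 i.1 := by
    intro y hy
    push Not at hy
    obtain ⟨l, hl, hyl⟩ := hy
    by_cases hagree : ∀ l ∈ centeredSupport c i.1, y l = i.1 l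
    · exact sum_mul_cylinderIndicator_lt_of_eqOn_centeredSupport a i hneg hagree hl hyl
    · push Not at hagree
      obtain ⟨l', hl', hyl'⟩ := hagree
      exact sum_mul_cylinderIndicator_lt_of_ne a i hneg hsmall hl' hyl'
  refine ⟨fun hmax => not_not.1 fun hy => (hmax i.1).not_gt (hlt y hy), fun hy y' => ?_⟩
  rw [hdep hy]
  by_cases hy' : ∀ l, Q {l} → y' l = i.1 l
  · rw [hdep hy']
  · exact (hlt y' hy').le

lemma forall_sum_pow_mul_cylinderIndicator_le_iff (hQ : ∀ s, Q s → ∀ t ⊆ s, Q t) {M L : ℝ}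
    (u : HierPoint c Q → ℝ) (i : HierPoint c Q) (hui : 1 ≤ u i) (hu : ∀ w ≠ i, u w ≤ -1)
    (hL : ∀ w, |u w| ≤ L) (hM : Nat.card (HierPoint c Q) * L < M) (y : ∀ i, α i) :
    (∀ y', ∑ w, M ^ #(centeredSupport c w.1) * u w * cylinderIndicator c w.1 y' ≤
        ∑ w, M ^ #(centeredSupport c w.1) * u w * cylinderIndicator c w.1 y) ↔
      ∀ l, Q {l} → y l = i.1 l := by
  have : Nonempty (HierPoint c Q) := ⟨i⟩
  have hcard : (1 : ℝ) ≤ Nat.card (HierPoint c Q) := by exact_mod_cast Nat.card_pos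
  have hL1 : 1 ≤ L := hui.trans ((le_abs_self _).trans (hL i))
  have hM1 : 1 ≤ M := by nlinarith
  refine forall_sum_mul_cylinderIndicator_le_iff hQ _ i
    (fun w hw => mul_neg_of_pos_of_neg (by positivity) (by linarith [hu w hw])) ?_ y
  set S := ∑ w with centeredSupport c w.1 ⊂ centeredSupport c i.1,
    |M ^ #(centeredSupport c w.1) * u w|
  have hterm : ∀ w ∈ ({w | centeredSupport c w.1 ⊂ centeredSupport c i.1} : Finset _),
      M * |M ^ #(centeredSupport c w.1) * u w| ≤ M ^ #(centeredSupport c i.1) * L := by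
    intro w hw
    rw [abs_mul, abs_of_pos (by positivity), ← mul_assoc, ← pow_succ']
    exact mul_le_mul (pow_le_pow_right₀ hM1 (card_lt_card (mem_filter.1 hw).2))
      (hL w) (abs_nonneg _) (by positivity)
  have hMS : M * S ≤ Nat.card (HierPoint c Q) * L * M ^ #(centeredSupport c i.1) := by
    rw [mul_sum]
    refine (sum_le_sum hterm).trans ?_
    have hpow : 0 ≤ M ^ #(centeredSupport c i.1) * L := by positivity
    rw [sum_const, nsmul_eq_mul, mul_assoc, mul_comm L]
    refine mul_le_mul_of_nonneg_right ?_ hpow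
    rw [Nat.card_eq_fintype_card]
    exact_mod_cast card_le_univ _
  have hpow : 0 < M ^ #(centeredSupport c i.1) := by positivity
  have hS : S < M ^ #(centeredSupport c i.1) :=
    lt_of_mul_lt_mul_left (hMS.trans_lt (mul_lt_mul_of_pos_right hM hpow)) (by linarith)
  nlinarith

end Hierarchical

section LinearAlgebra

lemma Submodule.finrank_mul_le {K R : Type*} [Field K] [Ring R] [Algebra K R]
    (U V : Submodule K R) [FiniteDimensional K U] [FiniteDimensional K V] :
    Module.finrank K ↥(U * V) ≤ Module.finrank K U * Module.finrank K V := by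
  have : FiniteDimensional K (span K (U : Set R)) := by rwa [span_eq]
  have : FiniteDimensional K (span K (V : Set R)) := by rwa [span_eq]
  obtain ⟨f, -, hf, -⟩ := exists_fun_fin_finrank_span_eq K (U : Set R)
  obtain ⟨g, -, hg, -⟩ := exists_fun_fin_finrank_span_eq K (V : Set R)
  have hfg : Set.range f * Set.range g = Set.range fun p : _ × _ => f p.1 * g p.2 := by
    ext x
    simp [Set.mem_mul]
  calc Module.finrank K ↥(U * V)
      = Module.finrank K ↥(span K (Set.range fun p : _ × _ => f p.1 * g p.2)) := by
        rw [← hfg, ← span_mul_span, hf, hg, span_eq, span_eq]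
    _ ≤ _ := finrank_range_le_card _
    _ = Module.finrank K U * Module.finrank K V := by
        rw [Fintype.card_prod, Fintype.card_fin, Fintype.card_fin, span_eq, span_eq]

lemma Matrix.rank_eq_finrank_span_range {m n : Type*} [Finite m] [Fintype n]
    (A : Matrix m n ℝ) : A.rank = Module.finrank ℝ (span ℝ (Set.range A)) :=
  A.rank_eq_finrank_span_row

lemma exists_mem_span_range_eq_mul {ρ σ κ T Y : Type*} [Fintype ρ] [Fintype σ] {A : Matrix ρ κ ℝ}
    {B : Matrix σ Y ℝ} (M : Matrix (ρ × σ) κ ℝ) (col : T → κ) (yT : T → Y)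
    (hM : ∀ p t, M p (col t) = A p.1 (col t) * B p.2 (yT t)) {f : κ → ℝ} {g : Y → ℝ}
    (hf : f ∈ span ℝ (Set.range A)) (hg : g ∈ span ℝ (Set.range B)) :
    ∃ v ∈ span ℝ (Set.range M), ∀ t, v (col t) = f (col t) * g (yT t) := by
  obtain ⟨α, rfl⟩ := (mem_span_range_iff_exists_fun ℝ).1 hf
  obtain ⟨β, rfl⟩ := (mem_span_range_iff_exists_fun ℝ).1 hg
  refine ⟨∑ p, (α p.1 * β p.2) • M p,
    sum_mem fun p _ => smul_mem _ _ (subset_span ⟨p, rfl⟩), fun t => ?_⟩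
  simp only [Finset.sum_apply, Pi.smul_apply, smul_eq_mul, hM, sum_mul_sum, Fintype.sum_prod_type]
  exact sum_congr rfl fun p _ => sum_congr rfl fun q _ => by ring

lemma Matrix.card_le_rank_of_forall_exists_mem_span {ρ κ T : Type*} [Fintype ρ] [Fintype κ]
    [Fintype T] [DecidableEq T] (M : Matrix ρ κ ℝ) (col : T → κ)
    (h : ∀ t₀, ∃ v ∈ span ℝ (Set.range M), ∀ t, v (col t) = (Pi.single t₀ 1 : T → ℝ) t) :
    Fintype.card T ≤ M.rank := by
  let R := (LinearMap.funLeft ℝ ℝ col).comp (span ℝ (Set.range M)).subtype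
  have hR : LinearMap.range R = ⊤ := by
    rw [eq_top_iff, ← (Pi.basisFun ℝ T).span_eq, span_le]
    rintro _ ⟨t₀, rfl⟩
    obtain ⟨v, hv, hvt⟩ := h t₀
    exact ⟨⟨v, hv⟩, funext fun t => by simpa [R] using hvt t⟩
  rw [Matrix.rank_eq_finrank_span_range, ← Module.finrank_fintype_fun_eq_card (R := ℝ),
    ← finrank_top, ← hR]
  exact LinearMap.finrank_range_le R

end LinearAlgebra

section Tropical

variable {a bn : ℕ} {X Y : Type*}

lemma exists_sum_mul_eq_sum_mul {W : Type*} [Fintype W] (A : Matrix (Fin a) X ℝ)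
    (B : Matrix (Fin bn) Y ℝ) (f : W → X → ℝ) (g : W → Y → ℝ)
    (hf : ∀ w, f w ∈ span ℝ (Set.range A)) (hg : ∀ w, g w ∈ span ℝ (Set.range B)) :
    ∃ θ : Fin a × Fin bn → ℝ,
      ∀ x y, ∑ s, θ s * (A s.1 x * B s.2 y) = ∑ w, f w x * g w y := by
  choose α hα using fun w => (mem_span_range_iff_exists_fun ℝ).1 (hf w)
  choose β hβ using fun w => (mem_span_range_iff_exists_fun ℝ).1 (hg w)
  refine ⟨fun s => ∑ w, α w s.1 * β w s.2, fun x y => ?_⟩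
  simp only [← hα, ← hβ, Finset.sum_apply, Pi.smul_apply, smul_eq_mul, sum_mul,
    Fintype.sum_prod_type]
  simp only [mul_sum]
  refine (sum_congr rfl fun p _ => sum_comm).trans <| sum_comm.trans <|
    sum_congr rfl fun w _ => sum_congr rfl fun p _ => sum_congr rfl fun q _ => by ring

variable [Fintype Y]

lemma tropMat_rank_le [Fintype X] (A : Matrix (Fin a) X ℝ) (B : Matrix (Fin bn) Y ℝ)
    (θ : Fin a × Fin bn → ℝ) : (tropMat A B θ).rank ≤ A.rank * B.rank := by
  let D : Matrix Y X ℝ := fun y x => if y ∈ infSet A B θ x then ((infSet A B θ x).card : ℝ)⁻¹ else 0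
  have hrow : ∀ p, tropMat A B θ p = A p.1 * (B * D) p.2 := fun p => by
    funext x
    rw [Pi.mul_apply, Matrix.mul_apply]
    simp only [tropMat, D, mul_ite, mul_zero, ← sum_filter, filter_mem_eq_inter, univ_inter,
      ← sum_mul, mul_comm]
  rw [Matrix.rank_eq_finrank_span_range, Matrix.rank_eq_finrank_span_range]
  calc Module.finrank ℝ (span ℝ (Set.range (tropMat A B θ)))
      ≤ Module.finrank ℝ ↥(span ℝ (Set.range A) * span ℝ (Set.range (B * D))) := by
        refine Submodule.finrank_mono (span_le.2 ?_)
        rintro _ ⟨p, rfl⟩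
        rw [hrow]
        exact mul_mem_mul (subset_span ⟨p.1, rfl⟩) (subset_span ⟨p.2, rfl⟩)
    _ ≤ _ := Submodule.finrank_mul_le _ _
    _ ≤ _ := by
        rw [← Matrix.rank_eq_finrank_span_range, ← Matrix.rank_eq_finrank_span_range]
        exact Nat.mul_le_mul_left _ (Matrix.rank_mul_le_left B D)

lemma infSet_eq_filter {A : Matrix (Fin a) X ℝ} {B : Matrix (Fin bn) Y ℝ}
    {θ : Fin a × Fin bn → ℝ} {x : X} {F : Y → ℝ}
    (hF : ∀ y, ∑ s, θ s * (A s.1 x * B s.2 y) = F y) :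
    infSet A B θ x = ({y | ∀ y', F y' ≤ F y} : Finset Y) := by
  simp only [infSet, hF]

lemma tropMat_apply_of_infSet_eq {A : Matrix (Fin a) X ℝ} {B : Matrix (Fin bn) Y ℝ}
    {θ : Fin a × Fin bn → ℝ} {x : X} {C : Finset Y} {y₀ : Y} (hC : infSet A B θ x = C)
    (hy₀ : y₀ ∈ C) (hB : ∀ q, ∀ y ∈ C, B q y = B q y₀) (p : Fin a × Fin bn) :
    tropMat A B θ p x = A p.1 x * B p.2 y₀ := by
  have : (C.card : ℝ) ≠ 0 := Nat.cast_ne_zero.2 (card_ne_zero_of_mem hy₀)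
  simp only [tropMat, hC, sum_congr rfl (hB p.2), sum_const, nsmul_eq_mul,
    inv_mul_cancel_left₀ this]

end Tropical

section LowerBound

variable {ι κ : Type*} [Fintype ι] [Fintype κ] [DecidableEq κ] {α : ι → Type*} {β : κ → Type*}
  [∀ i, DecidableEq (α i)] [∀ j, Fintype (β j)] {a bn k : ℕ} {A : Matrix (Fin a) (∀ i, α i) ℝ}
  {Q : Finset κ → Prop} {B : Matrix (Fin bn) (∀ j, β j) ℝ} {c₀ : ∀ j, β j}
  {cen : HierPoint c₀ Q → ∀ i, α i}

lemma exists_infSet_eq_of_hammingDist_le (hk : 1 ≤ k)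
    (hA : span ℝ (Set.range A) = hierarchicalSpace fun s => s.card ≤ k)
    (hQ : ∀ s, Q s → ∀ t ⊆ s, Q t) (hB : span ℝ (Set.range B) = hierarchicalSpace Q)
    (hdisj : ∀ w w', w ≠ w' → ∀ x, hammingDist x (cen w) ≤ k → k < hammingDist x (cen w')) :
    ∃ θ, ∀ w x, hammingDist x (cen w) ≤ k →
      infSet A B θ x = ({y | ∀ l, Q {l} → y l = w.1 l} : Finset _) := by
  let u : HierPoint c₀ Q → (∀ i, α i) → ℝ := fun w x => 2 * k + 1 - 2 * hammingDist x (cen w)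
  let L : ℝ := 2 * (k + Fintype.card ι) + 1
  let M : ℝ := Nat.card (HierPoint c₀ Q) * L + 1
  have hu : ∀ w, (fun x => M ^ #(centeredSupport c₀ w.1) * u w x) ∈ span ℝ (Set.range A) := by
    intro w
    rw [hA]
    have : (fun x => M ^ #(centeredSupport c₀ w.1) * u w x) = M ^ #(centeredSupport c₀ w.1) •
        ((fun _ => 2 * (k : ℝ) + 1) - (2 : ℝ) • fun x => (hammingDist x (cen w) : ℝ)) := by
      funext x
      simp [u]
    rw [this]
    exact smul_mem _ _ <| sub_mem (const_mem_hierarchicalSpace (by simp) _) <| smul_mem _ _ <|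
      hammingDist_mem_hierarchicalSpace (fun _ => by simpa using hk) _
  obtain ⟨θ, hθ⟩ := exists_sum_mul_eq_sum_mul A B _ (fun w => cylinderIndicator c₀ w.1) hu
    fun w => hB ▸ subset_span ⟨_, w.2, cylinderIndicator_dependsOn w.1⟩
  refine ⟨θ, fun i x hx => ?_⟩
  rw [infSet_eq_filter (hθ x)]
  ext y
  simp only [mem_filter, mem_univ, true_and]
  refine forall_sum_pow_mul_cylinderIndicator_le_iff hQ (fun w => u w x) i ?_ (fun w hw => ?_)
    (fun w => ?_) (lt_add_one _) y
  · have : (hammingDist x (cen i) : ℝ) ≤ k := by exact_mod_cast hx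
    simp only [u]
    linarith
  · have : (k : ℝ) + 1 ≤ hammingDist x (cen w) := by exact_mod_cast hdisj i w (Ne.symm hw) x hx
    simp only [u]
    linarith
  · have : (hammingDist x (cen w) : ℝ) ≤ Fintype.card ι := by
      exact_mod_cast hammingDist_le_card_fintype
    simp only [u, L, abs_le]
    constructor <;> linarith [(Nat.cast_nonneg _ : (0 : ℝ) ≤ hammingDist x (cen w))]

lemma tropMat_apply_of_hammingDist_le {θ : Fin a × Fin bn → ℝ} (hQ : ∀ s, Q s → ∀ t ⊆ s, Q t)
    (hB : span ℝ (Set.range B) = hierarchicalSpace Q)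
    (hθ : ∀ w x, hammingDist x (cen w) ≤ k →
      infSet A B θ x = ({y | ∀ l, Q {l} → y l = w.1 l} : Finset _))
    {w : HierPoint c₀ Q} {x : ∀ i, α i} (hx : hammingDist x (cen w) ≤ k) (p : Fin a × Fin bn) :
    tropMat A B θ p x = A p.1 x * B p.2 w.1 := by
  refine tropMat_apply_of_infSet_eq (hθ w x hx) (by simp) (fun q y hy => ?_) p
  have hBq : B q ∈ hierarchicalSpace Q := hB ▸ subset_span ⟨q, rfl⟩
  exact dependsOn_of_mem_hierarchicalSpace hQ hBq (by simpa using hy)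

variable [DecidableEq ι] [∀ i, Fintype (α i)]

lemma exists_mul_rank_le_rank_tropMat (hk : 1 ≤ k)
    (hA : span ℝ (Set.range A) = hierarchicalSpace fun s => s.card ≤ k)
    (hQ : ∀ s, Q s → ∀ t ⊆ s, Q t) (hB : span ℝ (Set.range B) = hierarchicalSpace Q)
    (hdisj : ∀ w w', w ≠ w' → ∀ x, hammingDist x (cen w) ≤ k → k < hammingDist x (cen w')) :
    ∃ θ, A.rank * B.rank ≤ (tropMat A B θ).rank := by
  have hball : ∀ s : Finset ι, s.card ≤ k → ∀ t ⊆ s, t.card ≤ k :=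
    fun s hs t ht => (card_le_card ht).trans hs
  obtain ⟨θ, hθ⟩ := exists_infSet_eq_of_hammingDist_le hk hA hQ hB hdisj
  refine ⟨θ, ?_⟩
  let T := Σ w : HierPoint c₀ Q, HierPoint (cen w) fun s => s.card ≤ k
  have hArank : ∀ w, Fintype.card (HierPoint (cen w) fun s => s.card ≤ k) = A.rank := fun w => by
    rw [Matrix.rank_eq_finrank_span_range, hA, finrank_hierarchicalSpace (cen w) hball,
      Nat.card_eq_fintype_card]
  have hBrank : B.rank = Fintype.card (HierPoint c₀ Q) := by
    rw [Matrix.rank_eq_finrank_span_range, hB, finrank_hierarchicalSpace c₀ hQ,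
      Nat.card_eq_fintype_card]
  calc A.rank * B.rank = Fintype.card T := by
        rw [Fintype.card_sigma, sum_congr rfl fun w _ => hArank w, sum_const, card_univ,
          smul_eq_mul, hBrank, mul_comm]
    _ ≤ _ := by
        refine Matrix.card_le_rank_of_forall_exists_mem_span _ (fun t : T => t.2.1) ?_
        rintro ⟨w₀, x₀⟩
        obtain ⟨f, hf, hfx⟩ :=
          exists_mem_hierarchicalSpace_eqOn hball fun x => if x = x₀ then (1 : ℝ) else 0
        obtain ⟨g, hg, hgw⟩ :=
          exists_mem_hierarchicalSpace_eqOn hQ fun w => if w = w₀ then (1 : ℝ) else 0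
        obtain ⟨v, hv, hvt⟩ := exists_mem_span_range_eq_mul _ (fun t : T => t.2.1) (·.1.1)
          (fun p t => tropMat_apply_of_hammingDist_le hQ hB hθ
            (card_centeredSupport (c := cen t.1) t.2.1 ▸ t.2.2) p) (hA ▸ hf) (hB ▸ hg)
        refine ⟨v, hv, fun ⟨w, x⟩ => ?_⟩
        rw [hvt, hgw]
        by_cases hw : w = w₀
        · subst hw
          simp [T, hfx, Pi.single_apply]
        · simp only [hw, Pi.single_apply, if_false, mul_zero]
          exact (if_neg fun h => hw (congrArg Sigma.fst h)).symm

end LowerBound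

end

theorem tropical_general_kronecker_general
    (n : ℕ) (q : Fin n → ℕ)
    (k : ℕ) (hk1 : 1 ≤ k)
    (a : ℕ) (A : Matrix (Fin a) (∀ i, Fin (q i)) ℝ)
    (hA : Submodule.span ℝ (Set.range A) = Vk n q k)
    (m : ℕ) (r : Fin m → ℕ) (hr : ∀ j, 2 ≤ r j)
    (Λ' : Finset (Finset (Fin m))) (hempty : ∅ ∈ Λ')
    (hΛ' : ∀ s ∈ Λ', ∀ t ⊆ s, t ∈ Λ')
    (bn : ℕ) (B : Matrix (Fin bn) (∀ j, Fin (r j)) ℝ)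
    (hB : Submodule.span ℝ (Set.range B) = VLam m r Λ')
    (c : Fin B.rank → ∀ i, Fin (q i))
    (hdisj : ∀ j j', j ≠ j' →
      ∀ x, ¬(hammingDist x (c j) ≤ k ∧ hammingDist x (c j') ≤ k)) :
    B.rank = 1 + ∑ s ∈ Λ'.erase ∅, ∏ j ∈ s, (r j - 1) ∧
    IsGreatest {s : ℕ | ∃ θ : Fin a × Fin bn → ℝ, s = (tropMat A B θ).rank}
      (A.rank * B.rank) := by
  let c₀ : ∀ j, Fin (r j) := fun j => ⟨0, by have := hr j; omega⟩
  have hBrank : B.rank = Nat.card (HierPoint c₀ (· ∈ Λ')) := by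
    rw [Matrix.rank_eq_finrank_span_range, hB]
    exact finrank_hierarchicalSpace c₀ hΛ'
  let e : Fin B.rank ≃ HierPoint c₀ (· ∈ Λ') := (finCongr hBrank).trans (Finite.equivFin _).symm
  have hdisj' : ∀ w w', w ≠ w' → ∀ x, hammingDist x (c (e.symm w)) ≤ k →
      k < hammingDist x (c (e.symm w')) := fun w w' hne x hx =>
    lt_of_not_ge fun hx' => hdisj _ _ (e.symm.injective.ne hne) x ⟨hx, hx'⟩
  obtain ⟨θ, hθ⟩ := exists_mul_rank_le_rank_tropMat hk1 hA hΛ' hB hdisj'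
  refine ⟨?_, ⟨θ, le_antisymm hθ (tropMat_rank_le A B θ)⟩, ?_⟩
  · rw [hBrank, card_hierPoint]
    simp only [Fintype.card_fin, Finset.filter_mem_eq_inter, Finset.univ_inter]
    rw [← Finset.add_sum_erase _ _ hempty, Finset.prod_empty]
  · rintro _ ⟨θ, rfl⟩
    exact tropMat_rank_le A B θ

/-- general Kronecker product of hierarchical models.  Visible
`k`-interaction model, hidden hierarchical model with interactions `Λ'` (so
`rank B = 1 + ∑_{λ'∈Λ'∖{∅}} ∏_{j∈λ'}(|Y_j|−1)`): if `X` contains `rank B` pairwise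
disjoint radius-`k` Hamming balls, then `max_θ rank 𝒜_θ = rank A · rank B`. -/
theorem tropical_general_kronecker
    (n : ℕ) (q : Fin n → ℕ) (hq : ∀ i, 2 ≤ q i)
    (k : ℕ) (hk1 : 1 ≤ k) (hkn : k ≤ n)
    (a : ℕ) (A : Matrix (Fin a) (∀ i, Fin (q i)) ℝ)
    (hA : Submodule.span ℝ (Set.range A) = Vk n q k)
    (m : ℕ) (r : Fin m → ℕ) (hr : ∀ j, 2 ≤ r j)
    (Λ' : Finset (Finset (Fin m))) (hempty : ∅ ∈ Λ')
    (hΛ' : ∀ s ∈ Λ', ∀ t ⊆ s, t ∈ Λ')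
    (bn : ℕ) (B : Matrix (Fin bn) (∀ j, Fin (r j)) ℝ)
    (hB : Submodule.span ℝ (Set.range B) = VLam m r Λ')
    (c : Fin B.rank → ∀ i, Fin (q i))
    (hdisj : ∀ j j', j ≠ j' →
      ∀ x, ¬(hammingDist x (c j) ≤ k ∧ hammingDist x (c j') ≤ k)) :
    B.rank = 1 + ∑ s ∈ Λ'.erase ∅, ∏ j ∈ s, (r j - 1) ∧
    IsGreatest {s : ℕ | ∃ θ : Fin a × Fin bn → ℝ, s = (tropMat A B θ).rank}
      (A.rank * B.rank) :=
  tropical_general_kronecker_general n q k hk1 a A hA m r hr Λ' hempty hΛ' bn B hB c hdisj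
end
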